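/- Let H be a bialgebra over a commutative ring R, n a natural number, and t^1, …, t^n : H → R R-linear functionals. Define d : H → H^n by (d a)_k = t^k_L(a) = Σ a_(1) t^k(a_(2)), the left H-action on H^n by (a • v)_k = a · v_k, and the left coaction Δ_L : H^n → (H ⊗ H)^n componentwise by (Δ_L v)_k = Δ(v_k), where (H ⊗ H)^n is a module over H ⊗ H componentwise. Then for all a, b ∈ H: Δ_L(a • d b) = Δ(a) · ( Σ b_(1) ⊗ d(b_(2)) ), meaning componentwise (Δ_L(a • d b))_k = Δ(a) · (Σ b_(1) ⊗ t^k_L(b_(2))). This is the left covariance of the first-order differential calculus (Proposition 5(ii)). -/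

import Mathlib

open TensorProduct

/-- The left-invariant vector field `t_L(a) = Σ a_(1) t(a_(2))`. -/
noncomputable def tL (R C : Type*) [CommRing R] [AddCommGroup C] [Module R C]
    [Coalgebra R C] (t : C →ₗ[R] R) : C →ₗ[R] C :=
  (TensorProduct.rid R C).toLinearMap ∘ₗ (LinearMap.lTensor C t) ∘ₗ Coalgebra.comul

section Coalgebra

variable (R C : Type*) [CommRing R] [AddCommGroup C] [Module R C] [Coalgebra R C]

/-- Both sides are `Σ b_(1) ⊗ b_(2) t(b_(3))`, bracketed differently; coassociativity
identifies them. -/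
theorem comul_comp_tL (t : C →ₗ[R] R) :
    Coalgebra.comul (R := R) ∘ₗ tL R C t = (tL R C t).lTensor C ∘ₗ Coalgebra.comul := by
  have comul_comp_rid : Coalgebra.comul (R := R) ∘ₗ (TensorProduct.rid R C).toLinearMap =
      (TensorProduct.rid R (C ⊗[R] C)).toLinearMap ∘ₗ Coalgebra.comul.rTensor R := by
    ext; simp
  have lTensor_rid : (TensorProduct.rid R C).toLinearMap.lTensor C =
      (TensorProduct.rid R (C ⊗[R] C)).toLinearMap ∘ₗ
        (TensorProduct.assoc R C C R).symm.toLinearMap := by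
    ext; simp
  rw [tL, ← LinearMap.comp_assoc, comul_comp_rid, LinearMap.lTensor_comp,
    LinearMap.lTensor_comp, lTensor_rid]
  simp only [coassoc_simps]

theorem comul_tL (t : C →ₗ[R] R) (b : C) :
    Coalgebra.comul (R := R) (tL R C t b) = (tL R C t).lTensor C (Coalgebra.comul (R := R) b) :=
  LinearMap.congr_fun (comul_comp_tL R C t) b

end Coalgebra

/-- left covariance of the first-order differential calculus
`d a = (t^1_L a, …, t^n_L a)`: componentwise,
`Δ_L(a • d b)_k = Δ(a * t^k_L b) = Δ(a) · (Σ b_(1) ⊗ t^k_L(b_(2)))`. -/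
theorem left_covariance (R H : Type*) [CommRing R] [Ring H] [Bialgebra R H]
    {n : ℕ} (t : Fin n → (H →ₗ[R] R)) :
    ∀ (a b : H) (k : Fin n),
      Coalgebra.comul (R := R) (a * tL R H (t k) b) =
        Coalgebra.comul (R := R) a *
          (LinearMap.lTensor H (tL R H (t k)) (Coalgebra.comul (R := R) b)) := by
  intro a b k
  rw [Bialgebra.comul_mul, comul_tL]
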